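/- arXiv:1104.0399 — 2 statements merged into one kernel-verified Lean document; each statement's English description precedes it below -/
import Mathlib

section
/- Let r, s be natural numbers and let ω be the volume element of Cl(r,s). For every isometry equivalence f of Q_{r,s}, one has map f ω = (det f) • ω, where det f ∈ {1, -1} is the determinant of the underlying linear equivalence of ℝ^{r+s}. In particular, map f ω = ω for every special isometry equivalence f. -/
open CliffordAlgebra

/-- The quadratic form `Q_{r,s}` on `ℝ^{r+s}`:
`Q(x) = -(x_0² + ⋯ + x_{r-1}²) + (x_r² + ⋯ + x_{r+s-1}²)`. -/
noncomputable def Qrs (r s : ℕ) : QuadraticForm ℝ (Fin (r + s) → ℝ) :=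
  QuadraticMap.weightedSumSquares ℝ
    (fun i : Fin (r + s) => if (i : ℕ) < r then (-1 : ℝ) else 1)

/-- The volume element `ω = ι(e_0) * ι(e_1) * ⋯ * ι(e_{r+s-1})` of `Cl(r,s)`. -/
noncomputable def volumeElt (r s : ℕ) : CliffordAlgebra (Qrs r s) :=
  (List.ofFn (fun i : Fin (r + s) => ι (Qrs r s) (Pi.single i 1))).prod

/-- An isometry equivalence of `Q_{r,s}` is special if its determinant is `1`. -/
noncomputable def IsSpecial {r s : ℕ} (f : (Qrs r s).IsometryEquiv (Qrs r s)) : Prop :=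
  LinearEquiv.det f.toLinearEquiv = 1

/-!
The standard basis of `ℝ^{r+s}` is `Q_{r,s}`-orthogonal, and so is its image under an isometry.
For pairwise orthogonal vectors the Clifford product agrees with the wedge product: the linear
isomorphism `equivExterior` between `Cl(Q)` and the exterior algebra (Chevalley's `changeForm`)
sends `ι v₀ * ⋯ * ι vₙ₋₁` to `v₀ ∧ ⋯ ∧ vₙ₋₁`. Hence it sends `map f ω` to
`f e₀ ∧ ⋯ ∧ f eₙ₋₁ = det f • e₀ ∧ ⋯ ∧ eₙ₋₁`, the image of `det f • ω`. Finally `det f = ±1`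
because `Aᵀ G A = G` for the matrix `A` of `f` and the invertible Gram matrix `G` of the polar form.
-/
section Alternating

variable {R M N ι : Type*} [CommRing R] [AddCommGroup M] [Module R M] [AddCommGroup N]
  [Module R N] [Fintype ι] [DecidableEq ι]

theorem AlternatingMap.eq_smulRight_basis_det (e : Module.Basis ι R M) (g : M [⋀^ι]→ₗ[R] N) :
    g = e.det.smulRight (g e) := by
  refine e.ext_alternating fun i hi => ?_
  let σ : Equiv.Perm ι := Equiv.ofBijective i (Finite.injective_iff_bijective.1 hi)
  change g (e ∘ σ) = e.det.smulRight (g e) (e ∘ σ)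
  rw [AlternatingMap.smulRight_apply, g.map_perm, e.det.map_perm, e.det_self]
  rcases Int.units_eq_one_or (Equiv.Perm.sign σ) with hs | hs <;> simp [hs]

theorem AlternatingMap.map_linearMap_comp_basis (e : Module.Basis ι R M) (g : M [⋀^ι]→ₗ[R] N)
    (f : M →ₗ[R] M) : g (f ∘ e) = LinearMap.det f • g e := by
  conv_lhs => rw [g.eq_smulRight_basis_det e]
  rw [AlternatingMap.smulRight_apply, e.det_comp, e.det_self, mul_one]

end Alternating

theorem QuadraticMap.IsOrtho.map {R M₁ M₂ N : Type*} [CommSemiring R] [AddCommMonoid M₁]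
    [AddCommMonoid M₂] [AddCommMonoid N] [Module R M₁] [Module R M₂] [Module R N]
    {Q₁ : QuadraticMap R M₁ N} {Q₂ : QuadraticMap R M₂ N} {x y : M₁} (h : Q₁.IsOrtho x y)
    (f : Q₁ →qᵢ Q₂) : Q₂.IsOrtho (f x) (f y) := by
  rw [isOrtho_def, ← map_add, f.map_app, f.map_app, f.map_app]
  exact h

namespace CliffordAlgebra

variable {R M : Type*} [CommRing R] [AddCommGroup M] [Module R M]

theorem contractLeft_prod_map_ι_eq_zero {Q : QuadraticForm R M} (d : Module.Dual R M) :
    ∀ L : List M, (∀ m ∈ L, d m = 0) → contractLeft d (L.map (ι Q)).prod = 0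
  | [], _ => by simp
  | a :: L, h => by
    rw [List.map_cons, List.prod_cons, contractLeft_ι_mul, h a List.mem_cons_self,
      contractLeft_prod_map_ι_eq_zero d L fun m hm => h m (List.mem_cons_of_mem _ hm)]
    simp

theorem changeForm_prod_map_ι {Q Q' : QuadraticForm R M} {B : LinearMap.BilinForm R M}
    (h : B.toQuadraticMap = Q' - Q) :
    ∀ L : List M, L.Pairwise (fun x y => B x y = 0) →
      changeForm h (L.map (ι Q)).prod = (L.map (ι Q')).prod
  | [], _ => by simp
  | a :: L, hL => by
    rw [List.pairwise_cons] at hL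
    rw [List.map_cons, List.prod_cons, changeForm_ι_mul, changeForm_prod_map_ι h L hL.2,
      contractLeft_prod_map_ι_eq_zero (B a) L hL.1, sub_zero]
    simp

theorem equivExterior_prod_ofFn_ι [Invertible (2 : R)] (Q : QuadraticForm R M) {n : ℕ}
    {v : Fin n → M} (hv : Pairwise fun i j => Q.IsOrtho (v i) (v j)) :
    equivExterior Q (List.ofFn fun i => ι Q (v i)).prod = ExteriorAlgebra.ιMulti R n v := by
  have hB : (List.ofFn v).Pairwise fun x y => QuadraticMap.associated (-Q) x y = 0 := by
    rw [List.pairwise_ofFn]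
    intro i j hij
    rw [QuadraticMap.associated_isOrtho, QuadraticMap.isOrtho_def]
    simp only [neg_apply, QuadraticMap.isOrtho_def.mp (hv hij.ne), neg_add]
  -- `equivExterior Q` is `changeForm` along the bilinear form `associated (-Q)`
  have h := changeForm_prod_map_ι (changeForm.associated_neg_proof (Q := Q)) _ hB
  rw [List.map_ofFn, List.map_ofFn] at h
  rw [ExteriorAlgebra.ιMulti_apply]
  exact h

theorem map_prod_ofFn_ι (Q : QuadraticForm R M) (f : Q →qᵢ Q) {n : ℕ} (v : Fin n → M) :
    map f (List.ofFn fun i => ι Q (v i)).prod = (List.ofFn fun i => ι Q (f (v i))).prod := by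
  simp only [map_list_prod, List.map_ofFn, Function.comp_def, map_apply_ι]

theorem map_prod_ofFn_ι_basis [Invertible (2 : R)] {Q : QuadraticForm R M} {n : ℕ}
    (e : Module.Basis (Fin n) R M) (he : Pairwise fun i j => Q.IsOrtho (e i) (e j))
    (f : Q →qᵢ Q) :
    map f (List.ofFn fun i => ι Q (e i)).prod =
      LinearMap.det f.toLinearMap • (List.ofFn fun i => ι Q (e i)).prod := by
  have hfe : Pairwise fun i j => Q.IsOrtho (f (e i)) (f (e j)) := fun _ _ hij => (he hij).map f
  apply (equivExterior Q).injective
  rw [map_prod_ofFn_ι, map_smul, equivExterior_prod_ofFn_ι Q hfe, equivExterior_prod_ofFn_ι Q he]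
  exact (ExteriorAlgebra.ιMulti R n).map_linearMap_comp_basis e f.toLinearMap

end CliffordAlgebra

theorem LinearMap.BilinForm.det_mul_self_eq_one_of_nondegenerate {A M : Type*} [CommRing A]
    [IsDomain A] [AddCommGroup M] [Module A M] [Module.Free A M] [Module.Finite A M]
    {B : LinearMap.BilinForm A M} (hB : B.Nondegenerate) {f : M →ₗ[A] M}
    (hf : ∀ x y, B (f x) (f y) = B x y) : LinearMap.det f * LinearMap.det f = 1 := by
  let b := Module.finBasis A M
  have hBf : B.comp f f = B := by ext x y; exact hf x y
  have hdet := congrArg Matrix.det (LinearMap.BilinForm.toMatrix_comp b b B f f)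
  rw [hBf, Matrix.det_mul, Matrix.det_mul, Matrix.det_transpose, LinearMap.det_toMatrix] at hdet
  refine mul_right_cancel₀ ((LinearMap.BilinForm.nondegenerate_iff_det_ne_zero b).mp hB) ?_
  linear_combination -hdet

namespace QuadraticMap

theorem Isometry.det_eq_one_or_eq_neg_one {A M : Type*} [CommRing A] [IsDomain A]
    [AddCommGroup M] [Module A M] [Module.Free A M] [Module.Finite A M] {Q : QuadraticForm A M}
    (hQ : (polarBilin Q).Nondegenerate) (f : Q →qᵢ Q) :
    LinearMap.det f.toLinearMap = 1 ∨ LinearMap.det f.toLinearMap = -1 :=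
  mul_self_eq_one_iff.mp <|
    LinearMap.BilinForm.det_mul_self_eq_one_of_nondegenerate hQ fun x y => by
      simp only [polarBilin_apply_apply, polar, Isometry.coe_toLinearMap, ← map_add, f.map_app]

variable {R ι : Type*} [CommRing R] [Fintype ι] [DecidableEq ι]

theorem weightedSumSquares_single (w : ι → R) (i : ι) :
    weightedSumSquares R w (Pi.single i 1) = w i := by
  simp [weightedSumSquares_apply, Pi.single_apply]

theorem isOrtho_weightedSumSquares_single (w : ι → R) {i j : ι} (hij : i ≠ j) :
    (weightedSumSquares R w).IsOrtho (Pi.single i 1) (Pi.single j 1) := by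
  rw [isOrtho_def]
  simp only [weightedSumSquares_apply, ← Finset.sum_add_distrib]
  refine Finset.sum_congr rfl fun k _ => ?_
  rcases eq_or_ne k i with rfl | hki
  · simp [hij]
  · simp [hki]

theorem nondegenerate_polarBilin_weightedSumSquares [IsDomain R] [NeZero (2 : R)] {w : ι → R}
    (hw : ∀ i, w i ≠ 0) : (polarBilin (weightedSumSquares R w)).Nondegenerate := by
  refine (LinearMap.BilinForm.iIsOrtho.nondegenerate_iff_not_isOrtho_basis_self _
    (Pi.basisFun R ι) fun i j hij => ?_).mpr fun i => ?_
  · simpa only [Function.onFun, Pi.basisFun_apply] using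
      isOrtho_polarBilin.mpr (isOrtho_weightedSumSquares_single w hij)
  · rw [Pi.basisFun_apply, polarBilin_apply_apply, polar_self, weightedSumSquares_single,
      nsmul_eq_mul]
    exact mul_ne_zero two_ne_zero (hw i)

end QuadraticMap

/-- For every isometry equivalence `f` of `Q_{r,s}`, one has `det f ∈ {1, -1}` and
`map f ω = (det f) • ω`; in particular `map f ω = ω` when `f` is special. -/
theorem map_volumeElt_eq_det_smul (r s : ℕ)
    (f : (Qrs r s).IsometryEquiv (Qrs r s)) :
    (((LinearEquiv.det f.toLinearEquiv : ℝˣ) : ℝ) = 1 ∨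
      ((LinearEquiv.det f.toLinearEquiv : ℝˣ) : ℝ) = -1) ∧
    CliffordAlgebra.map f.toIsometry (volumeElt r s) =
      ((LinearEquiv.det f.toLinearEquiv : ℝˣ) : ℝ) • volumeElt r s ∧
    (IsSpecial f →
      CliffordAlgebra.map f.toIsometry (volumeElt r s) = volumeElt r s) := by
  have hdet : LinearMap.det f.toIsometry.toLinearMap = 1 ∨
      LinearMap.det f.toIsometry.toLinearMap = -1 :=
    f.toIsometry.det_eq_one_or_eq_neg_one <|
      QuadraticMap.nondegenerate_polarBilin_weightedSumSquares fun i => by split_ifs <;> norm_num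
  have hmap : CliffordAlgebra.map f.toIsometry (volumeElt r s) =
      LinearMap.det f.toIsometry.toLinearMap • volumeElt r s := by
    have hω : volumeElt r s =
        (List.ofFn fun i => ι (Qrs r s) (Pi.basisFun ℝ (Fin (r + s)) i)).prod := by
      simp only [volumeElt, Pi.basisFun_apply]
    rw [hω]
    refine CliffordAlgebra.map_prod_ofFn_ι_basis (Pi.basisFun ℝ (Fin (r + s))) (fun _ _ hij => ?_)
      f.toIsometry
    simp only [Pi.basisFun_apply]
    exact QuadraticMap.isOrtho_weightedSumSquares_single _ hij
  have hcoe : ((LinearEquiv.det f.toLinearEquiv : ℝˣ) : ℝ) =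
      LinearMap.det f.toIsometry.toLinearMap :=
    LinearEquiv.coe_det _
  refine ⟨hcoe ▸ hdet, hcoe ▸ hmap, fun hf => ?_⟩
  rw [hmap, ← hcoe, hf, Units.val_one, one_smul]
end

section
/- Let r, s be natural numbers with r + s ≥ 1, and let ω be the volume element of Cl(r,s). Suppose J : Cl(r,s) → Cl(r,s) is an ℝ-linear map satisfying (i) J ∘ J = -id, (ii) J(x*y) = x * J(y) for all x, y ∈ Cl(r,s), and (iii) J(map f x) = map f (J x) for every special isometry equivalence f of Q_{r,s}. Then ω² = -1, and J(1) = ω or J(1) = -ω (hence J is right multiplication by ω or by -ω). -/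
/-
`J` is right multiplication by `a := J 1`, and `a * a = -1` because `J ∘ J = -id`. Since `J`
commutes with the automorphisms induced by special isometries, `a` is fixed by the sign changes
of an even number of coordinates. The sign change on `T` multiplies the monomial `e_S` by
`(-1) ^ #(S ∩ T)`, so averaging over all of them kills every monomial except `1` and `ω`, and
`a = α + β ω`. The sign change of a single coordinate fixes `1` and negates `ω`; comparing
`a² = -1` with its image gives `α β = 0`, and since `ω² = ±1` only `ω² = -1` and `a = ±ω` remain.
-/

open CliffordAlgebra

open QuadraticMap
open scoped symmDiff

section Anticommuting

variable {A : Type*} [Ring A]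

theorem List.mul_prod_eq_or_eq_neg_of_forall_anticomm {x : A} :
    ∀ {l : List A}, (∀ y ∈ l, x * y = -(y * x)) →
      x * l.prod = l.prod * x ∨ x * l.prod = -(l.prod * x)
  | [], _ => by simp
  | y :: l, h => by
    rw [List.forall_mem_cons] at h
    have hswap : x * (y * l.prod) = -(y * (x * l.prod)) := by
      rw [← mul_assoc, h.1, neg_mul, mul_assoc]
    rw [List.prod_cons, hswap]
    rcases List.mul_prod_eq_or_eq_neg_of_forall_anticomm h.2 with h' | h'
    · right; rw [h', mul_assoc]
    · left; rw [h', mul_neg, neg_neg, mul_assoc]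

theorem List.prod_mul_self_eq_one_or_eq_neg_one {l : List A}
    (hl : l.Pairwise fun x y => x * y = -(y * x)) (hsq : ∀ x ∈ l, x * x = 1 ∨ x * x = -1) :
    l.prod * l.prod = 1 ∨ l.prod * l.prod = -1 := by
  induction l with
  | nil => simp
  | cons x l ih =>
    rw [List.pairwise_cons] at hl
    rw [List.forall_mem_cons] at hsq
    have hx := List.mul_prod_eq_or_eq_neg_of_forall_anticomm hl.1
    have key : x * l.prod * (x * l.prod) = x * x * (l.prod * l.prod) ∨
        x * l.prod * (x * l.prod) = -(x * x * (l.prod * l.prod)) := by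
      rcases hx with h | h
      · left
        rw [mul_assoc, ← mul_assoc l.prod, ← h]
        noncomm_ring
      · right
        have h' : l.prod * x = -(x * l.prod) := by rw [h, neg_neg]
        rw [mul_assoc, ← mul_assoc l.prod, h']
        noncomm_ring
    rw [List.prod_cons]
    rcases key with h | h <;> rcases hsq.1 with h' | h' <;> rcases ih hl.2 hsq.2 with h'' | h'' <;>
      simp [h, h', h'']

end Anticommuting

namespace DiagonalClifford

section SignVec

variable (R : Type*) {I : Type*} [CommRing R] [DecidableEq I]

def signVec (T : Finset I) (k : I) : R := if k ∈ T then -1 else 1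

theorem signVec_mul_self (T : Finset I) (k : I) : signVec R T k * signVec R T k = 1 := by
  unfold signVec; split_ifs <;> simp

theorem prod_signVec_symmDiff_singleton (S T : Finset I) (i : I) :
    ∏ k ∈ S, signVec R ({i} ∆ T) k = (if i ∈ S then -1 else 1) * ∏ k ∈ S, signVec R T k := by
  have h (k : I) : signVec R ({i} ∆ T) k = (if k = i then -1 else 1) * signVec R T k := by
    unfold signVec
    by_cases hk : k = i <;> by_cases hT : k ∈ T <;> simp [hk, hT, Finset.mem_symmDiff]
  rw [Finset.prod_congr rfl fun k _ => h k, Finset.prod_mul_distrib, Finset.prod_ite_eq']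

variable {R} [Fintype I] [NoZeroDivisors R] [CharZero R] [DecidableEq R]

theorem sum_prod_signVec_eq_zero {S : Finset I} {i j : I} (hi : i ∈ S) (hj : j ∉ S) :
    ∑ T ∈ Finset.univ.filter (fun T => ∏ k, signVec R T k = 1), ∏ k ∈ S, signVec R T k =
      0 := by
  have hflip (U T : Finset I) : ∏ k ∈ U, signVec R ({i} ∆ ({j} ∆ T)) k =
      (if i ∈ U then -1 else 1) * ((if j ∈ U then -1 else 1) * ∏ k ∈ U, signVec R T k) := by
    rw [prod_signVec_symmDiff_singleton, prod_signVec_symmDiff_singleton]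
  have hneg (T : Finset I) :
      ∏ k ∈ S, signVec R T k + ∏ k ∈ S, signVec R ({i} ∆ ({j} ∆ T)) k = 0 := by
    simp [hflip, hi, hj]
  refine Finset.sum_involution (fun T _ => {i} ∆ ({j} ∆ T)) (fun T _ => hneg T)
    (fun T _ hT hfix => hT ?_) (fun T hT => ?_) (fun T _ => ?_)
  · simpa [hfix] using hneg T
  · simp_all
  · rw [symmDiff_left_comm (a := ({j} : Finset I)), symmDiff_symmDiff_cancel_left,
      symmDiff_symmDiff_cancel_left]

end SignVec

section Monomials

variable {R I : Type*} [CommRing R] [LinearOrder I] [Fintype I] (w : I → R)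

noncomputable def gen (i : I) : CliffordAlgebra (weightedSumSquares R w) :=
  ι _ (Pi.single i 1)

noncomputable def monomial (S : Finset I) : CliffordAlgebra (weightedSumSquares R w) :=
  (S.sort.map (gen w)).prod

theorem gen_mul_self (i : I) : gen w i * gen w i = algebraMap R _ (w i) := by
  rw [gen, ι_sq_scalar, weightedSumSquares_apply, Finset.sum_eq_single i] <;>
    intros <;> simp_all

theorem gen_mul_gen_of_ne {i j : I} (h : i ≠ j) : gen w i * gen w j = -(gen w j * gen w i) := by
  refine ι_mul_ι_comm_of_isOrtho ?_
  rw [isOrtho_def]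
  simp only [weightedSumSquares_apply, ← Finset.sum_add_distrib]
  refine Finset.sum_congr rfl fun k _ => ?_
  by_cases hi : k = i <;> by_cases hj : k = j <;> simp_all

theorem ι_eq_sum_smul_gen (v : I → R) : ι _ v = ∑ k, v k • gen w k := by
  conv_lhs => rw [← Finset.univ_sum_single v]
  rw [map_sum]
  refine Finset.sum_congr rfl fun k _ => ?_
  rw [gen, ← map_smul, ← Pi.single_smul', smul_eq_mul, mul_one]

theorem monomial_empty : monomial w ∅ = 1 := by
  simp [monomial]

theorem monomial_insert_of_lt {a : I} {S : Finset I} (h : ∀ b ∈ S, a < b) :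
    monomial w (insert a S) = gen w a * monomial w S := by
  rw [monomial, Finset.sort_insert _ (fun b hb => (h b hb).le) fun ha => (h a ha).false,
    List.map_cons, List.prod_cons, monomial]

theorem gen_mul_monomial (i : I) (S : Finset I) :
    ∃ c : R, gen w i * monomial w S = c • monomial w ({i} ∆ S) := by
  induction S using Finset.induction_on_min with
  | empty =>
    refine ⟨1, ?_⟩
    rw [monomial_empty, mul_one, one_smul, ← Finset.bot_eq_empty, symmDiff_bot]
    simp [monomial, gen]
  | insert a S ha ih =>
    rcases lt_trichotomy i a with hia | rfl | hai
    · refine ⟨1, ?_⟩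
      have hS : {i} ∆ insert a S = insert i (insert a S) := by
        ext; grind [Finset.mem_symmDiff]
      have hiS : ∀ b ∈ insert a S, i < b := by grind
      rw [one_smul, hS, monomial_insert_of_lt w hiS, monomial_insert_of_lt w ha]
    · refine ⟨w i, ?_⟩
      have hS : {i} ∆ insert i S = S := by
        ext; grind [Finset.mem_symmDiff]
      rw [hS, monomial_insert_of_lt w ha, ← mul_assoc, gen_mul_self, Algebra.smul_def]
    · obtain ⟨c, hc⟩ := ih
      refine ⟨-c, ?_⟩
      have hS : {i} ∆ insert a S = insert a ({i} ∆ S) := by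
        ext; grind [Finset.mem_symmDiff]
      have ha' : ∀ b ∈ {i} ∆ S, a < b := by
        grind [Finset.mem_symmDiff]
      rw [hS, monomial_insert_of_lt w ha, monomial_insert_of_lt w ha', ← mul_assoc,
        gen_mul_gen_of_ne w hai.ne', neg_mul, mul_assoc, hc, mul_smul_comm, neg_smul]

theorem span_range_monomial : Submodule.span R (Set.range (monomial w)) = ⊤ := by
  set W := Submodule.span R (Set.range (monomial w))
  have hgen (i : I) : W ≤ W.comap (LinearMap.mulLeft R (gen w i)) := by
    refine Submodule.span_le.mpr (Set.range_subset_iff.mpr fun S => ?_)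
    obtain ⟨c, hc⟩ := gen_mul_monomial w i S
    simpa [hc] using W.smul_mem c (Submodule.subset_span ⟨_, rfl⟩)
  refine Submodule.eq_top_iff'.mpr fun x => ?_
  induction x using CliffordAlgebra.left_induction with
  | algebraMap c =>
    rw [Algebra.algebraMap_eq_smul_one, ← monomial_empty w]
    exact W.smul_mem c (Submodule.subset_span ⟨_, rfl⟩)
  | add x y hx hy => exact W.add_mem hx hy
  | ι_mul x v hx =>
    rw [ι_eq_sum_smul_gen w, Finset.sum_mul]
    exact W.sum_mem fun k _ => by
      rw [smul_mul_assoc]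
      exact W.smul_mem _ (hgen k hx)

theorem monomial_mul_self (S : Finset I) (hw : ∀ i ∈ S, w i = 1 ∨ w i = -1) :
    monomial w S * monomial w S = 1 ∨ monomial w S * monomial w S = -1 := by
  refine List.prod_mul_self_eq_one_or_eq_neg_one ?_ ?_
  · exact List.pairwise_map.mpr ((S.sort_nodup _).imp fun h => gen_mul_gen_of_ne w h)
  · simp only [List.mem_map, Finset.mem_sort]
    rintro _ ⟨i, hi, rfl⟩
    rcases hw i hi with h | h <;> simp [gen_mul_self, h]

theorem monomial_univ_fin {n : ℕ} (w : Fin n → R) :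
    monomial w Finset.univ =
      (List.ofFn fun i => ι (weightedSumSquares R w) (Pi.single i 1)).prod := by
  rw [monomial, Fin.sort_univ, List.ofFn_eq_map]
  rfl

noncomputable def signFlip (T : Finset I) :
    (weightedSumSquares R w).IsometryEquiv (weightedSumSquares R w) where
  toLinearEquiv := LinearEquiv.ofInvolutive (Matrix.toLin' (Matrix.diagonal (signVec R T)))
    fun v => by ext k; simp [Matrix.mulVec_diagonal, ← mul_assoc, signVec_mul_self]
  map_app' v := by
    simp only [weightedSumSquares_apply]
    refine Finset.sum_congr rfl fun k _ => ?_
    change w k • ((Matrix.toLin' (Matrix.diagonal (signVec R T)) v) k *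
      (Matrix.toLin' (Matrix.diagonal (signVec R T)) v) k) = _
    rw [Matrix.toLin'_apply, Matrix.mulVec_diagonal, mul_mul_mul_comm, signVec_mul_self, one_mul]

theorem signFlip_apply (T : Finset I) (v : I → R) (k : I) :
    signFlip w T v k = signVec R T k * v k := by
  change Matrix.toLin' (Matrix.diagonal (signVec R T)) v k = _
  simp [Matrix.mulVec_diagonal]

theorem det_signFlip (T : Finset I) :
    (LinearEquiv.det (signFlip w T).toLinearEquiv : R) = ∏ k, signVec R T k := by
  rw [LinearEquiv.coe_det]
  change LinearMap.det (Matrix.toLin' (Matrix.diagonal (signVec R T))) = _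
  rw [LinearMap.det_toLin', Matrix.det_diagonal]

theorem map_signFlip_gen (T : Finset I) (k : I) :
    map (signFlip w T).toIsometry (gen w k) = signVec R T k • gen w k := by
  rw [gen, map_apply_ι, ← map_smul]
  congr 1
  ext m
  by_cases hm : m = k <;> simp [signFlip_apply, hm]

theorem map_signFlip_monomial (T S : Finset I) :
    map (signFlip w T).toIsometry (monomial w S) = (∏ k ∈ S, signVec R T k) • monomial w S := by
  induction S using Finset.induction_on_min with
  | empty => simp [monomial_empty]
  | insert a S ha ih =>
    rw [monomial_insert_of_lt w ha, map_mul, ih, map_signFlip_gen, smul_mul_smul_comm,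
      Finset.prod_insert fun h => (ha a h).false]

theorem map_signFlip_singleton_monomial_univ (i : I) :
    map (signFlip w {i}).toIsometry (monomial w Finset.univ) = -monomial w Finset.univ := by
  rw [map_signFlip_monomial]
  simp [signVec]

end Monomials

variable {K I : Type*} [Field K] [CharZero K] [LinearOrder I] [Fintype I]

theorem mem_span_one_monomial_univ_of_map_signFlip_eq (w : I → K)
    (x : CliffordAlgebra (weightedSumSquares K w))
    (hx : ∀ T, LinearEquiv.det (signFlip w T).toLinearEquiv = 1 →
      map (signFlip w T).toIsometry x = x) :
    x ∈ Submodule.span K {1, monomial w Finset.univ} := by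
  classical
  set E := Finset.univ.filter (fun T : Finset I => ∏ k, signVec K T k = 1)
  have hE : (E.card : K) ≠ 0 := Nat.cast_ne_zero.mpr (Finset.card_ne_zero.mpr
    ⟨∅, by simp [E, signVec]⟩)
  obtain ⟨c, rfl⟩ := (Submodule.mem_span_range_iff_exists_fun K).mp
    ((span_range_monomial w).symm ▸ Submodule.mem_top : x ∈ Submodule.span K _)
  have havg : ∑ T ∈ E, map (signFlip w T).toIsometry (∑ S, c S • monomial w S) =
      (E.card : K) • ∑ S, c S • monomial w S := by
    rw [Finset.sum_congr rfl fun T hT => hx T ?_, Finset.sum_const, Nat.cast_smul_eq_nsmul]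
    exact Units.val_eq_one.mp ((det_signFlip w T).trans (Finset.mem_filter.mp hT).2)
  have hexp : ∑ T ∈ E, map (signFlip w T).toIsometry (∑ S, c S • monomial w S) =
      ∑ S, (c S * ∑ T ∈ E, ∏ k ∈ S, signVec K T k) • monomial w S := by
    simp only [map_sum, map_smul, map_signFlip_monomial, smul_smul, Finset.mul_sum,
      Finset.sum_smul]
    exact Finset.sum_comm
  rw [← Submodule.smul_mem_iff _ hE, ← havg, hexp]
  refine Submodule.sum_mem _ fun S _ => ?_
  by_cases h0 : S = ∅
  · rw [h0, monomial_empty]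
    exact Submodule.smul_mem _ _ (Submodule.subset_span (Set.mem_insert _ _))
  by_cases h1 : S = Finset.univ
  · rw [h1]
    exact Submodule.smul_mem _ _ (Submodule.subset_span (Set.mem_insert_of_mem _ rfl))
  obtain ⟨i, hi⟩ := Finset.nonempty_iff_ne_empty.mpr h0
  obtain ⟨j, hj⟩ : ∃ j, j ∉ S := by simpa [Finset.eq_univ_iff_forall] using h1
  have hzero : ∑ T ∈ E, ∏ k ∈ S, signVec K T k = 0 := sum_prod_signVec_eq_zero hi hj
  rw [hzero, mul_zero, zero_smul]
  exact Submodule.zero_mem _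

end DiagonalClifford

theorem apply_one_mul_apply_one_eq_neg_one {A : Type*} [Ring A] (J : A → A)
    (hJJ : ∀ x, J (J x) = -x) (hmul : ∀ x y, J (x * y) = x * J y) : J 1 * J 1 = -1 := by
  rw [← hmul, mul_one, hJJ]

theorem mul_self_eq_neg_one_and_eq_or_eq_neg {A : Type*} [Ring A] [Algebra ℝ A] [Nontrivial A]
    (ρ : A →ₐ[ℝ] A) {ω a : A} (hρ : ρ ω = -ω) (hω : ω * ω = 1 ∨ ω * ω = -1)
    (ha : a ∈ Submodule.span ℝ {1, ω}) (haa : a * a = -1) :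
    ω * ω = -1 ∧ (a = ω ∨ a = -ω) := by
  obtain ⟨α, β, rfl⟩ := Submodule.mem_span_pair.mp ha
  have hsq (α β : ℝ) : (α • 1 + β • ω) * (α • 1 + β • ω) =
      (α * α) • 1 + (2 * α * β) • ω + (β * β) • (ω * ω) := by
    simp only [add_mul, mul_add, smul_mul_smul_comm, one_mul, mul_one]
    module
  have hρa : ρ (α • 1 + β • ω) = α • 1 + (-β) • ω := by simp [hρ]
  have hρsq : (α • 1 + (-β) • ω) * (α • 1 + (-β) • ω) = -1 := by
    rw [← hρa, ← map_mul, haa, map_neg, map_one]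
  have hω0 : ω ≠ 0 := by rintro rfl; simp at hω
  have hαβ : α * β = 0 := by
    have h4 : (4 * (α * β)) • ω = 0 := by
      linear_combination (norm := module) haa - hρsq - hsq α β + hsq α (-β)
    simpa [hω0] using h4
  have hscalar (c : ℝ) (hc : c • (1 : A) = -1) : c = -1 := by
    have : (c + 1) • (1 : A) = 0 := by rw [add_smul, hc, one_smul, neg_add_cancel]
    linarith [(smul_eq_zero.mp this).resolve_right one_ne_zero]
  rw [hsq] at haa
  rcases mul_eq_zero.mp hαβ with rfl | rfl
  · rcases hω with h | h
    · have := hscalar (β * β) (by simpa [h] using haa)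
      nlinarith
    · have hβ : β * β = 1 := by
        have := hscalar (-(β * β)) (by simpa [h] using haa)
        linarith
      refine ⟨h, ?_⟩
      rcases mul_self_eq_one_iff.mp hβ with rfl | rfl <;> simp
  · have := hscalar (α * α) (by simpa using haa)
    nlinarith

def qrsWeight (r s : ℕ) (i : Fin (r + s)) : ℝ := if (i : ℕ) < r then -1 else 1

open DiagonalClifford

/-- Any `SO(r,s)`-equivariant complex structure on `Cl(r,s)` forces `ω² = -1`
and is right multiplication by `±ω`. -/
theorem equivariant_complex_structure_eq_pm_volumeElt (r s : ℕ) (hrs : 1 ≤ r + s)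
    (J : CliffordAlgebra (Qrs r s) →ₗ[ℝ] CliffordAlgebra (Qrs r s))
    (h1 : ∀ x, J (J x) = -x)
    (h2 : ∀ x y, J (x * y) = x * J y)
    (h3 : ∀ f : (Qrs r s).IsometryEquiv (Qrs r s), IsSpecial f →
      ∀ x, J (CliffordAlgebra.map f.toIsometry x) =
        CliffordAlgebra.map f.toIsometry (J x)) :
    volumeElt r s ^ 2 = -1 ∧
    (J 1 = volumeElt r s ∨ J 1 = -volumeElt r s) := by
  have hω : volumeElt r s = monomial (qrsWeight r s) Finset.univ :=
    (monomial_univ_fin (qrsWeight r s)).symm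
  rw [pow_two, hω]
  refine mul_self_eq_neg_one_and_eq_or_eq_neg
    (map (signFlip (qrsWeight r s) {⟨0, hrs⟩}).toIsometry)
    (map_signFlip_singleton_monomial_univ _ _) (monomial_mul_self _ _ fun i _ => ?_)
    (mem_span_one_monomial_univ_of_map_signFlip_eq _ (J 1) fun T hT => ?_)
    (apply_one_mul_apply_one_eq_neg_one J h1 h2)
  · unfold qrsWeight
    split_ifs <;> simp
  · have h := h3 (signFlip (qrsWeight r s) T) hT 1
    rw [map_one] at h
    exact h.symm
end
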